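/- arXiv:2006.13822 — 9 statements merged into one kernel-verified Lean document; each statement's English description precedes it below -/
import Mathlib

section
/- Let G be a connected diamond-free graph in which every induced P4 is settled. If G is not complete bipartite, then every edge of G that forms a maximal clique (i.e., whose two endpoints have no common neighbor) is a simplicial clique. -/
def DiamondFree {V : Type*} (G : SimpleGraph V) : Prop :=
  ¬ ∃ a b c d : V, a ≠ b ∧ a ≠ c ∧ a ≠ d ∧ b ≠ c ∧ b ≠ d ∧ c ≠ d ∧
    G.Adj a b ∧ G.Adj a c ∧ G.Adj a d ∧ G.Adj b c ∧ G.Adj b d ∧ ¬ G.Adj c d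

/-- (a,b,c,d) is an induced path on four vertices. -/
def InducedP4 {V : Type*} (G : SimpleGraph V) (a b c d : V) : Prop :=
  a ≠ b ∧ a ≠ c ∧ a ≠ d ∧ b ≠ c ∧ b ≠ d ∧ c ≠ d ∧
    G.Adj a b ∧ G.Adj b c ∧ G.Adj c d ∧ ¬ G.Adj a c ∧ ¬ G.Adj a d ∧ ¬ G.Adj b d

/-- The induced P4 (a,b,c,d) is settled. -/
def Settled {V : Type*} (G : SimpleGraph V) (a b c d : V) : Prop :=
  ∃ v : V, G.Adj v b ∧ G.Adj v c ∧ ¬ G.Adj v a ∧ ¬ G.Adj v d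

/-- G is complete bipartite: V partitions into two stable sets with all cross edges. -/
def IsCompleteBipartite {V : Type*} (G : SimpleGraph V) : Prop :=
  ∃ A B : Set V, A ∪ B = Set.univ ∧ A ∩ B = ∅ ∧
    ∀ u v : V, G.Adj u v ↔ ((u ∈ A ∧ v ∈ B) ∨ (u ∈ B ∧ v ∈ A))

/-- In a connected diamond-free graph where every induced P4 is settled and which
is not complete bipartite, every edge forming a maximal clique is a simplicial clique. -/
theorem stmt6 {V : Type*} (G : SimpleGraph V) (hconn : G.Connected) (hdf : DiamondFree G)
    (hsettled : ∀ a b c d : V, InducedP4 G a b c d → Settled G a b c d)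
    (hnotcb : ¬ IsCompleteBipartite G)
    (a b : V) (hab : G.Adj a b) (hmax : ∀ c : V, ¬ (G.Adj c a ∧ G.Adj c b)) :
    ∃ v ∈ ({a, b} : Set V), insert v (G.neighborSet v) = {a, b} := by
  by_cases ha : ∀ x, G.Adj a x → x = b
  · refine ⟨a, by simp, ?_⟩
    ext x
    simp only [Set.mem_insert_iff, SimpleGraph.mem_neighborSet, Set.mem_singleton_iff]
    constructor
    · rintro (rfl | h)
      · exact Or.inl rfl
      · exact Or.inr (ha x h)
    · rintro (rfl | rfl)
      · exact Or.inl rfl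
      · exact Or.inr hab
  by_cases hb : ∀ x, G.Adj b x → x = a
  · refine ⟨b, by simp, ?_⟩
    ext x
    simp only [Set.mem_insert_iff, SimpleGraph.mem_neighborSet, Set.mem_singleton_iff]
    constructor
    · rintro (rfl | h)
      · exact Or.inr rfl
      · exact Or.inl (hb x h)
    · rintro (rfl | rfl)
      · exact Or.inr hab.symm
      · exact Or.inl rfl
  exfalso
  push_neg at ha hb
  obtain ⟨a1, ha1, ha1b⟩ := ha
  obtain ⟨b1, hb1, hb1a⟩ := hb
  -- all cross edges between N(a)\{b} and N(b)\{a}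
  have hcross : ∀ x y, G.Adj a x → x ≠ b → G.Adj b y → y ≠ a → G.Adj x y := by
    intro x y hax hxb hby hya
    by_contra hxy
    have hxnb : ¬ G.Adj x b := fun h => hmax x ⟨hax.symm, h⟩
    have hyna : ¬ G.Adj y a := fun h => hmax y ⟨h, hby.symm⟩
    have hxy' : x ≠ y := by
      rintro rfl; exact hmax x ⟨hax.symm, hby.symm⟩
    have hp4 : InducedP4 G x a b y :=
      ⟨hax.symm.ne, hxb, hxy', hab.ne, fun h => hya h.symm, hby.ne,
        hax.symm, hab, hby, hxnb, hxy, fun h => hyna h.symm⟩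
    obtain ⟨v, hva, hvb, _, _⟩ := hsettled _ _ _ _ hp4
    exact hmax v ⟨hva, hvb⟩
  -- N(a)\{b} is stable
  have hstableA : ∀ x y, G.Adj a x → x ≠ b → G.Adj a y → y ≠ b → x ≠ y → ¬ G.Adj x y := by
    intro x y hax hxb hay hyb hxy hadj
    have hxb1 : G.Adj x b1 := hcross x b1 hax hxb hb1 hb1a
    have hyb1 : G.Adj y b1 := hcross y b1 hay hyb hb1 hb1a
    have hxa : x ≠ a := hax.symm.ne
    have hya : y ≠ a := hay.symm.ne
    have hxnb1 : x ≠ b1 := by rintro rfl; exact hmax x ⟨hax.symm, hb1.symm⟩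
    have hynb1 : y ≠ b1 := by rintro rfl; exact hmax y ⟨hay.symm, hb1.symm⟩
    have hanb1 : ¬ G.Adj a b1 := fun h => hmax b1 ⟨h.symm, hb1.symm⟩
    exact hdf ⟨x, y, a, b1, hxy, hxa, hxnb1, hya, hynb1, fun h => hb1a h.symm,
      hadj, hax.symm, hxb1, hay.symm, hyb1, hanb1⟩
  -- N(b)\{a} is stable
  have hstableB : ∀ x y, G.Adj b x → x ≠ a → G.Adj b y → y ≠ a → x ≠ y → ¬ G.Adj x y := by
    intro x y hbx hxa hby hya hxy hadj
    have hxa1 : G.Adj x a1 := (hcross a1 x ha1 ha1b hbx hxa).symm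
    have hya1 : G.Adj y a1 := (hcross a1 y ha1 ha1b hby hya).symm
    have hxb : x ≠ b := hbx.symm.ne
    have hyb : y ≠ b := hby.symm.ne
    have hxna1 : x ≠ a1 := by rintro rfl; exact hmax x ⟨ha1.symm, hbx.symm⟩
    have hyna1 : y ≠ a1 := by rintro rfl; exact hmax y ⟨ha1.symm, hby.symm⟩
    have hbna1 : ¬ G.Adj b a1 := fun h => hmax a1 ⟨ha1.symm, h.symm⟩
    exact hdf ⟨x, y, b, a1, hxy, hxb, hxna1, hyb, hyna1, fun h => ha1b h.symm,
      hadj, hbx.symm, hxa1, hby.symm, hya1, hbna1⟩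
  -- S = N(b) ∪ N(a) is closed under adjacency
  have hclosed : ∀ x w, (G.Adj b x ∨ G.Adj a x) → G.Adj x w → (G.Adj b w ∨ G.Adj a w) := by
    intro x w hx hxw
    by_cases hwa : w = a
    · subst hwa; exact Or.inl hab.symm
    by_cases hwb : w = b
    · subst hwb; exact Or.inr hab
    by_cases haw : G.Adj a w
    · exact Or.inr haw
    by_cases hbw : G.Adj b w
    · exact Or.inl hbw
    rcases hx with hbx | hax
    · -- x ∈ N(b)
      rcases eq_or_ne x a with rfl | hxa
      · exact Or.inr hxw
      have hxb : x ≠ b := hbx.symm.ne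
      have hxna : ¬ G.Adj x a := fun h => hmax x ⟨h, hbx.symm⟩
      have hp4 : InducedP4 G w x b a :=
        ⟨hxw.symm.ne, hwb, hwa, hxb, hxa, fun h => hab.ne h.symm,
          hxw.symm, hbx.symm, hab.symm,
          fun h => hbw h.symm, fun h => haw h.symm, hxna⟩
      obtain ⟨v, hvx, hvb, hvw, hva⟩ := hsettled _ _ _ _ hp4
      have hvna : v ≠ a := by rintro rfl; exact hmax x ⟨hvx.symm, hbx.symm⟩
      have hvnx : v ≠ x := hvx.ne
      exact absurd hvx (hstableB v x (hvb.symm) hvna hbx hxa hvnx)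
    · -- x ∈ N(a)
      rcases eq_or_ne x b with rfl | hxb
      · exact Or.inl hxw
      have hxa : x ≠ a := hax.symm.ne
      have hxnb : ¬ G.Adj x b := fun h => hmax x ⟨hax.symm, h⟩
      have hp4 : InducedP4 G w x a b :=
        ⟨hxw.symm.ne, hwa, hwb, hxa, hxb, hab.ne,
          hxw.symm, hax.symm, hab,
          fun h => haw h.symm, fun h => hbw h.symm, hxnb⟩
      obtain ⟨v, hvx, hva, hvw, hvb⟩ := hsettled _ _ _ _ hp4
      have hvnb : v ≠ b := by rintro rfl; exact hmax x ⟨hax.symm, hvx.symm⟩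
      have hvnx : v ≠ x := hvx.ne
      exact absurd hvx (hstableA v x (hva.symm) hvnb hax hxb hvnx)
  have key : ∀ x u, (G.Adj b x ∨ G.Adj a x) → G.Walk x u → (G.Adj b u ∨ G.Adj a u) := by
    intro x u hx w
    induction w with
    | nil => exact hx
    | cons h p ih => exact ih (hclosed _ _ hx h)
  have hall : ∀ u, G.Adj b u ∨ G.Adj a u := by
    intro u
    obtain ⟨w⟩ := hconn.preconnected a u
    exact key a u (Or.inl hab.symm) w
  apply hnotcb
  refine ⟨{x | G.Adj b x}, {x | G.Adj a x}, ?_, ?_, ?_⟩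
  · ext x; simp only [Set.mem_union, Set.mem_setOf_eq, Set.mem_univ, iff_true]
    exact hall x
  · ext x; simp only [Set.mem_inter_iff, Set.mem_setOf_eq, Set.mem_empty_iff_false, iff_false]
    rintro ⟨h1, h2⟩
    exact hmax x ⟨h2.symm, h1.symm⟩
  · intro u v
    simp only [Set.mem_setOf_eq]
    constructor
    · intro huv
      rcases hall u with hu | hu <;> rcases hall v with hv | hv
      · -- both in N(b)
        exfalso
        rcases eq_or_ne u a with rfl | hua
        · exact hmax v ⟨huv.symm, hv.symm⟩
        rcases eq_or_ne v a with rfl | hva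
        · exact hmax u ⟨huv, hu.symm⟩
        exact hstableB u v hu hua hv hva huv.ne huv
      · exact Or.inl ⟨hu, hv⟩
      · exact Or.inr ⟨hu, hv⟩
      · -- both in N(a)
        exfalso
        rcases eq_or_ne u b with rfl | hub
        · exact hmax v ⟨hv.symm, huv.symm⟩
        rcases eq_or_ne v b with rfl | hvb
        · exact hmax u ⟨hu.symm, huv⟩
        exact hstableA u v hu hub hv hvb huv.ne huv
    · rintro (⟨hu, hv⟩ | ⟨hu, hv⟩)
      · rcases eq_or_ne u a with rfl | hua
        · exact hv
        rcases eq_or_ne v b with rfl | hvb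
        · exact hu.symm
        exact (hcross v u hv hvb hu hua).symm
      · rcases eq_or_ne v a with rfl | hva
        · exact hu.symm
        rcases eq_or_ne u b with rfl | hub
        · exact hv
        exact hcross u v hu hub hv hva
end

section
/- If G is a CIS graph (every maximal clique intersects every maximal stable set), then every induced P4 in G is settled: for every induced path (a,b,c,d) there exists a vertex v adjacent to b and c but not to a or d. -/
def IsStable {V : Type*} (G : SimpleGraph V) (S : Set V) : Prop :=
  ∀ u ∈ S, ∀ v ∈ S, ¬ G.Adj u v

def IsMaxStable {V : Type*} (G : SimpleGraph V) (S : Set V) : Prop :=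
  IsStable G S ∧ ∀ T : Set V, IsStable G T → S ⊆ T → S = T

def IsMaxClique {V : Type*} (G : SimpleGraph V) (C : Set V) : Prop :=
  G.IsClique C ∧ ∀ D : Set V, G.IsClique D → C ⊆ D → C = D

lemma exists_maxClique {V : Type*} (G : SimpleGraph V) (C0 : Set V) (h0 : G.IsClique C0) :
    ∃ C : Set V, IsMaxClique G C ∧ C0 ⊆ C := by
  obtain ⟨C, hsub, hC⟩ := zorn_subset_nonempty {C : Set V | G.IsClique C}
    (fun c hc hchain hne => by
      refine ⟨⋃₀ c, ?_, fun s hs => Set.subset_sUnion_of_mem hs⟩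
      intro u hu v hv huv
      obtain ⟨s, hs, hus⟩ := hu
      obtain ⟨t, ht, hvt⟩ := hv
      rcases hchain.total hs ht with h | h
      · exact hc ht (h hus) hvt huv
      · exact hc hs hus (h hvt) huv) C0 h0
  exact ⟨C, ⟨hC.1, fun D hD hCD => Set.Subset.antisymm hCD (hC.2 hD hCD)⟩, hsub⟩

lemma exists_maxStable {V : Type*} (G : SimpleGraph V) (S0 : Set V) (h0 : IsStable G S0) :
    ∃ S : Set V, IsMaxStable G S ∧ S0 ⊆ S := by
  obtain ⟨S, hsub, hS⟩ := zorn_subset_nonempty {S : Set V | IsStable G S}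
    (fun c hc hchain hne => by
      refine ⟨⋃₀ c, ?_, fun s hs => Set.subset_sUnion_of_mem hs⟩
      intro u hu v hv huv
      obtain ⟨s, hs, hus⟩ := hu
      obtain ⟨t, ht, hvt⟩ := hv
      rcases hchain.total hs ht with h | h
      · exact hc ht u (h hus) v hvt huv
      · exact hc hs u hus v (h hvt) huv) S0 h0
  exact ⟨S, ⟨hS.1, fun T hT hST => Set.Subset.antisymm hST (hS.2 hT hST)⟩, hsub⟩

/-- In a CIS graph every induced P4 is settled. -/
theorem stmt7 {V : Type*} [Fintype V] (G : SimpleGraph V)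
    (hCIS : ∀ C S : Set V, IsMaxClique G C → IsMaxStable G S → (C ∩ S).Nonempty)
    (a b c d : V) (hP4 : InducedP4 G a b c d) :
    ∃ v : V, G.Adj v b ∧ G.Adj v c ∧ ¬ G.Adj v a ∧ ¬ G.Adj v d := by
  obtain ⟨hab, hac, had, hbc, hbd, hcd, Aab, Abc, Acd, Nac, Nad, Nbd⟩ := hP4
  obtain ⟨C, hC, hCsub⟩ := exists_maxClique G {b, c} (by
    intro u hu v hv huv
    rcases hu with rfl | rfl <;> rcases hv with rfl | rfl <;>
      simp_all [SimpleGraph.adj_comm] )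
  obtain ⟨S, hS, hSsub⟩ := exists_maxStable G {a, d} (by
    intro u hu v hv
    rcases hu with rfl | rfl <;> rcases hv with rfl | rfl <;>
      simp_all [SimpleGraph.adj_comm] )
  obtain ⟨v, hvC, hvS⟩ := hCIS C S hC hS
  have haS : a ∈ S := hSsub (by simp)
  have hdS : d ∈ S := hSsub (by simp)
  have hbC : b ∈ C := hCsub (by simp)
  have hcC : c ∈ C := hCsub (by simp)
  have hNva : ¬ G.Adj v a := hS.1 v hvS a haS
  have hNvd : ¬ G.Adj v d := hS.1 v hvS d hdS
  have hvb : v ≠ b := by rintro rfl; exact hNva Aab.symm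
  have hvc : v ≠ c := by rintro rfl; exact hNvd Acd
  exact ⟨v, hC.1 hvC hbC hvb, hC.1 hvC hcC hvc, hNva, hNvd⟩
end

section
/- Let G be a diamond-free graph, let C' = {v_1, ..., v_ℓ} be a clique with ℓ ≥ 2, and let C_1, ..., C_ℓ be maximal cliques in G such that C_i ∩ C' = {v_i}, |C_i| ≥ ℓ for all i, and C_i ∩ C_j = ∅ for i ≠ j. Then there exists a stable set S ⊆ ∪_{i=1}^ℓ C_i disjoint from C' of size ℓ − 1 such that S dominates exactly ℓ − 1 vertices of C' (each vertex of S has exactly one neighbor in C', all distinct). -/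
/-- In a diamond-free graph, a vertex outside a maximal clique has at most one
neighbor in the clique. -/
lemma diamondFree_max_clique_unique_nbr {V : Type*} [DecidableEq V] (G : SimpleGraph V)
    (hdf : DiamondFree G) (D : Finset V) (hcl : G.IsClique ↑D)
    (hmax : ∀ E : Finset V, G.IsClique ↑E → D ⊆ E → D = E)
    (x : V) (hx : x ∉ D) {a b : V} (ha : a ∈ D) (hb : b ∈ D)
    (hxa : G.Adj x a) (hxb : G.Adj x b) : a = b := by
  by_contra hab
  have hw : ∃ w ∈ D, ¬ G.Adj x w := by
    by_contra h
    push_neg at h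
    have hclique : G.IsClique ↑(insert x D) := by
      intro p hp q hq hpq
      simp only [Finset.coe_insert, Set.mem_insert_iff, Finset.mem_coe] at hp hq
      rcases hp with rfl | hp
      · rcases hq with rfl | hq
        · exact absurd rfl hpq
        · exact h q hq
      · rcases hq with rfl | hq
        · exact (h p hp).symm
        · exact hcl hp hq hpq
    have := hmax _ hclique (Finset.subset_insert _ _)
    exact hx (this ▸ Finset.mem_insert_self x D)
  obtain ⟨w, hwD, hxw⟩ := hw
  have haw : a ≠ w := fun h => hxw (h ▸ hxa)
  have hbw : b ≠ w := fun h => hxw (h ▸ hxb)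
  have hax : a ≠ x := fun h => hx (h ▸ ha)
  have hbx : b ≠ x := fun h => hx (h ▸ hb)
  have hxw' : x ≠ w := fun h => hx (h ▸ hwD)
  exact hdf ⟨a, b, x, w, hab, hax, haw, hbx, hbw, hxw',
    hcl ha hb hab, hxa.symm, hcl ha hwD haw, hxb.symm, hcl hb hwD hbw, hxw⟩

/-- the technical lemma producing a stable set of size ℓ-1 dominating
exactly ℓ-1 vertices of the clique C'. -/
theorem stmt8 {V : Type*} [DecidableEq V] (G : SimpleGraph V) (hdf : DiamondFree G)
    (ℓ : ℕ) (hℓ : 2 ≤ ℓ) (v : Fin ℓ → V) (hv : Function.Injective v)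
    (C' : Finset V) (hC'v : C' = Finset.image v Finset.univ) (hC' : G.IsClique ↑C')
    (C : Fin ℓ → Finset V)
    (hcl : ∀ i, G.IsClique ↑(C i))
    (hmax : ∀ i, ∀ D : Finset V, G.IsClique ↑D → C i ⊆ D → C i = D)
    (hint : ∀ i, C i ∩ C' = {v i})
    (hcard : ∀ i, ℓ ≤ (C i).card)
    (hdisj : ∀ i j, i ≠ j → Disjoint (C i) (C j)) :
    ∃ S : Finset V, (∀ x ∈ S, ∃ i, x ∈ C i) ∧ Disjoint S C' ∧
      (∀ x ∈ S, ∀ y ∈ S, ¬ G.Adj x y) ∧ S.card = ℓ - 1 ∧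
      ({x ∈ (C' : Set V) | ∃ s ∈ S, G.Adj s x}).ncard = ℓ - 1 := by
  classical
  have key := fun i => diamondFree_max_clique_unique_nbr G hdf (C i) (hcl i) (hmax i)
  have hvC : ∀ i, v i ∈ C i := by
    intro i
    have : v i ∈ C i ∩ C' := (hint i) ▸ Finset.mem_singleton_self _
    exact (Finset.mem_inter.1 this).1
  have hvC' : ∀ i, v i ∈ C' := by
    intro i; rw [hC'v]; exact Finset.mem_image_of_mem v (Finset.mem_univ i)
  -- a vertex of C i other than v i is not adjacent to any v j, j ≠ i
  have lem2 : ∀ (i : Fin ℓ) (x : V), x ∈ C i → x ≠ v i →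
      ∀ j : Fin ℓ, j ≠ i → ¬ G.Adj x (v j) := by
    intro i x hx hxvi j hj hadj
    have hvjC : v j ∉ C i := by
      intro h
      have : v j ∈ C i ∩ C' := Finset.mem_inter.2 ⟨h, hvC' j⟩
      rw [hint i, Finset.mem_singleton] at this
      exact hj (hv this)
    have hvij : v j ≠ v i := fun h => hj (hv h)
    have : x = v i :=
      key i (v j) hvjC hx (hvC i) hadj.symm (hC' (hvC' j) (hvC' i) hvij)
    exact hxvi this
  -- greedy construction
  have main : ∀ k : ℕ, k ≤ ℓ - 1 → ∃ s : Fin ℓ → V, ∀ i : Fin ℓ, i.val < k →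
      s i ∈ C i ∧ s i ≠ v i ∧ ∀ j : Fin ℓ, j.val < k → j ≠ i → ¬ G.Adj (s i) (s j) := by
    intro k
    induction k with
    | zero => intro _; exact ⟨v, fun i hi => absurd hi (Nat.not_lt_zero _)⟩
    | succ k ih =>
      intro hk1
      obtain ⟨s, hs⟩ := ih (le_trans (Nat.le_succ k) hk1)
      have hkℓ : k < ℓ := by omega
      set ik : Fin ℓ := ⟨k, hkℓ⟩ with hik
      -- forbidden vertices in C ik
      set Bad : Finset V := (C ik).filter
        (fun x => x = v ik ∨ ∃ j : Fin ℓ, j.val < k ∧ G.Adj (s j) x) with hBad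
      have hjneik : ∀ j : Fin ℓ, j.val < k → j ≠ ik := by
        intro j hj h; rw [h] at hj; exact absurd hj (lt_irrefl _)
      have hsjC : ∀ j : Fin ℓ, j.val < k → s j ∉ C ik := by
        intro j hj h
        have := hdisj j ik (hjneik j hj)
        exact (Finset.disjoint_left.1 this) (hs j hj).1 h
      -- choose function
      have hBadcard : Bad.card ≤ k + 1 := by
        set f : ℕ → V := fun j =>
          if hj : j < ℓ then
            (if h : ∃ x ∈ C ik, G.Adj (s ⟨j, hj⟩) x then h.choose else v ⟨0, by omega⟩)
          else v ⟨0, by omega⟩ with hf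
        have hsub : Bad ⊆ insert (v ik) ((Finset.range k).image f) := by
          intro x hx
          rw [hBad, Finset.mem_filter] at hx
          obtain ⟨hxC, hx2⟩ := hx
          rcases hx2 with rfl | ⟨j, hjk, hadj⟩
          · exact Finset.mem_insert_self _ _
          · refine Finset.mem_insert_of_mem (Finset.mem_image.2 ⟨j.val, Finset.mem_range.2 hjk, ?_⟩)
            have hjℓ : j.val < ℓ := j.isLt
            have hjeq : (⟨j.val, hjℓ⟩ : Fin ℓ) = j := Fin.ext rfl
            have hex : ∃ y ∈ C ik, G.Adj (s (⟨j.val, hjℓ⟩ : Fin ℓ)) y := by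
              rw [hjeq]; exact ⟨x, hxC, hadj⟩
            have hfj : f j.val = hex.choose := by
              rw [hf]; simp only [hjℓ, dif_pos, hex, dif_pos]
            refine hfj.trans ?_
            obtain ⟨hc1, hc2⟩ := hex.choose_spec
            have hadj' : G.Adj (s (⟨j.val, hjℓ⟩ : Fin ℓ)) x := by rw [hjeq]; exact hadj
            exact key ik _ (hsjC (⟨j.val, hjℓ⟩ : Fin ℓ) hjk) hc1 hxC hc2 hadj'
        calc Bad.card ≤ (insert (v ik) ((Finset.range k).image f)).card :=
              Finset.card_le_card hsub
          _ ≤ ((Finset.range k).image f).card + 1 := Finset.card_insert_le _ _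
          _ ≤ (Finset.range k).card + 1 := by
              exact Nat.add_le_add_right (Finset.card_image_le) 1
          _ = k + 1 := by rw [Finset.card_range]
      have hex : ∃ x, x ∈ C ik \ Bad := by
        have hd := Finset.le_card_sdiff Bad (C ik)
        have hc := hcard ik
        have : 0 < (C ik \ Bad).card := by omega
        exact Finset.card_pos.1 this
      obtain ⟨x, hx⟩ := hex
      rw [Finset.mem_sdiff] at hx
      obtain ⟨hxC, hxBad⟩ := hx
      rw [hBad, Finset.mem_filter] at hxBad
      push_neg at hxBad
      obtain ⟨hxvik, hxnadj⟩ := hxBad hxC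
      refine ⟨Function.update s ik x, ?_⟩
      intro i hi
      by_cases hiik : i = ik
      · subst hiik
        rw [Function.update_self]
        refine ⟨hxC, hxvik, ?_⟩
        intro j hj hji
        have hjk : j.val < k := by
          have : j.val ≤ k := Nat.lt_succ_iff.1 hj
          rcases Nat.lt_or_ge j.val k with h | h
          · exact h
          · exfalso; exact hji (Fin.ext (show j.val = k by omega))
        rw [Function.update_of_ne hji]
        intro hadj
        exact hxnadj j hjk hadj.symm
      · have hik2 : i.val < k := by
          have : i.val ≤ k := Nat.lt_succ_iff.1 hi
          rcases Nat.lt_or_ge i.val k with h | h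
          · exact h
          · exfalso; exact hiik (Fin.ext (show i.val = k by omega))
        rw [Function.update_of_ne hiik]
        obtain ⟨h1, h2, h3⟩ := hs i hik2
        refine ⟨h1, h2, ?_⟩
        intro j hj hji
        by_cases hjik : j = ik
        · subst hjik
          rw [Function.update_self]
          intro hadj
          exact hxnadj i hik2 hadj
        · have hjk : j.val < k := by
            have : j.val ≤ k := Nat.lt_succ_iff.1 hj
            rcases Nat.lt_or_ge j.val k with h | h
            · exact h
            · exfalso; exact hjik (Fin.ext (show j.val = k by omega))
          rw [Function.update_of_ne hjik]
          exact h3 j hjk hji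
  obtain ⟨s, hs⟩ := main (ℓ - 1) le_rfl
  set T : Finset (Fin ℓ) := Finset.univ.filter (fun i => i.val < ℓ - 1) with hT
  have hTmem : ∀ i : Fin ℓ, i ∈ T ↔ i.val < ℓ - 1 := by
    intro i; rw [hT, Finset.mem_filter]; simp
  have hTcard : T.card = ℓ - 1 := by
    have : T = Finset.map ⟨fun i : Fin (ℓ-1) => (⟨i.val, by omega⟩ : Fin ℓ),
        by intro a b h; simpa [Fin.ext_iff] using h⟩ Finset.univ := by
      ext i
      rw [hTmem, Finset.mem_map]
      constructor
      · intro h; exact ⟨⟨i.val, h⟩, Finset.mem_univ _, Fin.ext rfl⟩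
      · rintro ⟨a, _, rfl⟩; exact a.isLt
    rw [this, Finset.card_map, Finset.card_univ, Fintype.card_fin]
  have hsinjT : ∀ i ∈ T, ∀ j ∈ T, s i = s j → i = j := by
    intro i hi j hj h
    by_contra hij
    have := hdisj i j hij
    exact (Finset.disjoint_left.1 this) ((hs i ((hTmem i).1 hi)).1)
      (h ▸ (hs j ((hTmem j).1 hj)).1)
  set S : Finset V := T.image s with hS
  have hSmem : ∀ x, x ∈ S ↔ ∃ i ∈ T, s i = x := by
    intro x; rw [hS, Finset.mem_image]
  refine ⟨S, ?_, ?_, ?_, ?_, ?_⟩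
  · intro x hx
    obtain ⟨i, hi, rfl⟩ := (hSmem x).1 hx
    exact ⟨i, (hs i ((hTmem i).1 hi)).1⟩
  · rw [Finset.disjoint_left]
    intro x hx hxC'
    obtain ⟨i, hi, rfl⟩ := (hSmem x).1 hx
    have h1 := (hs i ((hTmem i).1 hi)).1
    have h2 := (hs i ((hTmem i).1 hi)).2.1
    have : s i ∈ C i ∩ C' := Finset.mem_inter.2 ⟨h1, hxC'⟩
    rw [hint i, Finset.mem_singleton] at this
    exact h2 this
  · intro x hx y hy
    obtain ⟨i, hi, rfl⟩ := (hSmem x).1 hx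
    obtain ⟨j, hj, rfl⟩ := (hSmem y).1 hy
    by_cases hij : i = j
    · subst hij; exact G.irrefl
    · exact (hs i ((hTmem i).1 hi)).2.2 j ((hTmem j).1 hj) (Ne.symm hij)
  · rw [hS, Finset.card_image_of_injOn hsinjT, hTcard]
  · have hset : {x ∈ (C' : Set V) | ∃ t ∈ S, G.Adj t x} = ↑(T.image v) := by
      ext x
      simp only [Set.mem_setOf_eq, Finset.coe_image, Set.mem_image, Finset.mem_coe]
      constructor
      · rintro ⟨hxC', t, htS, hadj⟩
        obtain ⟨i, hi, rfl⟩ := (hSmem t).1 htS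
        have hxim : ∃ m : Fin ℓ, v m = x := by
          rw [hC'v] at hxC'
          obtain ⟨m, _, hm⟩ := Finset.mem_image.1 hxC'
          exact ⟨m, hm⟩
        obtain ⟨m, rfl⟩ := hxim
        have h1 := (hs i ((hTmem i).1 hi)).1
        have h2 := (hs i ((hTmem i).1 hi)).2.1
        have : m = i := by
          by_contra hmi
          exact lem2 i (s i) h1 h2 m (fun h => hmi (h ▸ rfl)) hadj
        exact ⟨i, hi, this ▸ rfl⟩
      · rintro ⟨i, hi, rfl⟩
        refine ⟨Finset.mem_coe.2 (hvC' i), s i, (hSmem _).2 ⟨i, hi, rfl⟩, ?_⟩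
        have h1 := (hs i ((hTmem i).1 hi)).1
        have h2 := (hs i ((hTmem i).1 hi)).2.1
        exact hcl i h1 (hvC i) h2
    rw [hset, Set.ncard_coe_finset, Finset.card_image_of_injective _ hv, hTcard]
end

section
/- Let G be a diamond-free graph, let C' = {v_1, ..., v_ℓ} be a clique with ℓ ≥ 2, and let C_1, ..., C_ℓ be pairwise disjoint maximal cliques with C_i ∩ C' = {v_i} and |C_i| ≥ ℓ for all i. If moreover max_i |C_i| > ℓ, then there exists a stable set S ⊆ ∪_{i=1}^ℓ C_i of size ℓ disjoint from C' such that every vertex of C' has a neighbor in S. -/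
/-!
In a diamond-free graph a vertex `x` outside a maximal clique `K` has at most one neighbour
in `K`: by maximality some `c ∈ K` is not adjacent to `x`, and two neighbours `a, b ∈ K` of `x`
would then span a diamond with `x` and `c`. So we can pick pairwise non-adjacent
`s_i ∈ C_i \ {v_i}` greedily, handling a clique with more than `ℓ` vertices last: every vertex
chosen before forbids at most one vertex of `C_i`, and `v_i` is excluded as well, so at most
`ℓ - 1` vertices of `C_i` are forbidden (at most `ℓ` for the last clique). Each `s_i` dominates
`v_i`, both lying in the clique `C_i`.
-/

open Finset Function

namespace DiamondFree

variable {V : Type*} {G : SimpleGraph V}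

theorem adj_of_adj_of_adj (hdf : DiamondFree G) {K : Set V} (hK : G.IsClique K)
    {a b c x : V} (ha : a ∈ K) (hb : b ∈ K) (hc : c ∈ K) (hab : a ≠ b) (hx : x ∉ K)
    (hxa : G.Adj x a) (hxb : G.Adj x b) : G.Adj x c := by
  by_contra hxc
  have hac : a ≠ c := fun h => hxc (h ▸ hxa)
  have hbc : b ≠ c := fun h => hxc (h ▸ hxb)
  have hax : a ≠ x := fun h => hx (h ▸ ha)
  have hbx : b ≠ x := fun h => hx (h ▸ hb)
  have hxc' : x ≠ c := fun h => hx (h ▸ hc)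
  exact hdf ⟨a, b, x, c, hab, hax, hac, hbx, hbc, hxc', hK ha hb hab, hxa.symm, hK ha hc hac,
    hxb.symm, hK hb hc hbc, hxc⟩

variable {K : Finset V}

theorem eq_of_adj_of_adj (hdf : DiamondFree G) (hK : G.IsClique (K : Set V))
    (hmax : ∀ D : Finset V, G.IsClique (D : Set V) → K ⊆ D → K = D) {a b x : V}
    (ha : a ∈ K) (hb : b ∈ K) (hx : x ∉ K) (hxa : G.Adj x a) (hxb : G.Adj x b) : a = b := by
  classical
  by_contra hab
  have hxK : G.IsClique (insert x K : Finset V) := by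
    rw [coe_insert]
    exact hK.insert fun c hc _ => hdf.adj_of_adj_of_adj hK ha hb hc hab hx hxa hxb
  exact hx (hmax _ hxK (subset_insert x K) ▸ mem_insert_self x K)

theorem exists_mem_ne_forall_not_adj (hdf : DiamondFree G) (hK : G.IsClique (K : Set V))
    (hmax : ∀ D : Finset V, G.IsClique (D : Set V) → K ⊆ D → K = D) (u : V) {S : Finset V}
    (hS : Disjoint S K) (hcard : #S + 1 < #K) :
    ∃ x ∈ K, x ≠ u ∧ ∀ s ∈ S, ¬ G.Adj s x := by
  classical
  set F := insert u (S.biUnion fun s => K.filter (G.Adj s))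
  have hF : #F ≤ #S + 1 := by
    refine (card_insert_le _ _).trans (Nat.add_le_add_right ?_ 1)
    refine (card_biUnion_le_card_mul _ _ 1 fun s hs => card_le_one.2 fun a ha b hb => ?_).trans
      (Nat.mul_one _).le
    rw [mem_filter] at ha hb
    exact hdf.eq_of_adj_of_adj hK hmax ha.1 hb.1 (disjoint_left.1 hS hs) ha.2 hb.2
  obtain ⟨x, hxK, hxF⟩ := exists_mem_notMem_of_card_lt_card (hF.trans_lt hcard)
  exact ⟨x, hxK, fun h => hxF (h ▸ mem_insert_self _ _), fun s hs hsx =>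
    hxF (mem_insert_of_mem (mem_biUnion.2 ⟨s, hs, mem_filter.2 ⟨hxK, hsx⟩⟩))⟩

end DiamondFree

namespace SimpleGraph

variable {V ι : Type*} (G : SimpleGraph V) (C : ι → Finset V) (v : ι → V)

def IsStableTransversal (T : Finset ι) (f : ι → V) : Prop :=
  (∀ i ∈ T, f i ∈ C i ∧ f i ≠ v i) ∧ ∀ i ∈ T, ∀ j ∈ T, ¬ G.Adj (f i) (f j)

variable {G C v}

namespace IsStableTransversal

variable {T : Finset ι} {f : ι → V}

theorem disjoint_image [DecidableEq V] (hdisj : Pairwise (Disjoint on C))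
    (h : G.IsStableTransversal C v T f) {i : ι} (hi : i ∉ T) : Disjoint (T.image f) (C i) := by
  rw [Finset.disjoint_left]
  intro _ hx
  obtain ⟨j, hj, rfl⟩ := mem_image.1 hx
  exact Finset.disjoint_left.1 (hdisj (ne_of_mem_of_not_mem hj hi)) (h.1 j hj).1

theorem exists_insert [DecidableEq ι] (hdf : DiamondFree G) (hcl : ∀ i, G.IsClique (C i : Set V))
    (hmax : ∀ i, ∀ D : Finset V, G.IsClique (D : Set V) → C i ⊆ D → C i = D)
    (hdisj : Pairwise (Disjoint on C)) (h : G.IsStableTransversal C v T f) {i : ι} (hi : i ∉ T)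
    (hcard : #T + 1 < #(C i)) : ∃ g, G.IsStableTransversal C v (insert i T) g := by
  classical
  obtain ⟨x, hxC, hxv, hx⟩ := hdf.exists_mem_ne_forall_not_adj (hcl i) (hmax i) (v i)
    (h.disjoint_image hdisj hi) ((Nat.add_le_add_right card_image_le 1).trans_lt hcard)
  have hupd : ∀ j ∈ T, update f i x j = f j := fun j hj =>
    update_of_ne (ne_of_mem_of_not_mem hj hi) _ _
  have hxf : ∀ j ∈ T, ¬ G.Adj x (f j) := fun j hj hadj => hx _ (mem_image_of_mem f hj) hadj.symm
  refine ⟨update f i x, ?_, ?_⟩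
  · simp only [forall_mem_insert, update_self]
    exact ⟨⟨hxC, hxv⟩, fun j hj => hupd j hj ▸ h.1 j hj⟩
  · simp only [forall_mem_insert, update_self]
    refine ⟨⟨G.irrefl, fun k hk => hupd k hk ▸ hxf k hk⟩, fun j hj => ?_⟩
    rw [hupd j hj]
    exact ⟨fun hadj => hxf j hj hadj.symm, fun k hk => hupd k hk ▸ h.2 j hj k hk⟩

theorem card_image [DecidableEq V] (hdisj : Pairwise (Disjoint on C))
    (h : G.IsStableTransversal C v T f) : #(T.image f) = #T :=
  card_image_of_injOn fun i hi j hj hij => by_contra fun hne =>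
    Finset.disjoint_left.1 (hdisj hne) (h.1 i hi).1 (hij ▸ (h.1 j hj).1)

end IsStableTransversal

theorem exists_isStableTransversal [DecidableEq ι] (hdf : DiamondFree G)
    (hcl : ∀ i, G.IsClique (C i : Set V))
    (hmax : ∀ i, ∀ D : Finset V, G.IsClique (D : Set V) → C i ⊆ D → C i = D)
    (hdisj : Pairwise (Disjoint on C)) (T : Finset ι) (hT : ∀ i ∈ T, #T < #(C i)) :
    ∃ f, G.IsStableTransversal C v T f := by
  induction T using Finset.induction_on with
  | empty => exact ⟨v, by simp [IsStableTransversal]⟩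
  | insert i T hi ih =>
    rw [card_insert_of_notMem hi] at hT
    obtain ⟨f, hf⟩ := ih fun j hj => (Nat.lt_succ_self _).trans (hT j (mem_insert_of_mem hj))
    exact hf.exists_insert hdf hcl hmax hdisj hi (hT i (mem_insert_self i T))

end SimpleGraph

theorem stmt9_general {V : Type*} [DecidableEq V] (G : SimpleGraph V) (hdf : DiamondFree G)
    (ℓ : ℕ) (v : Fin ℓ → V)
    (C' : Finset V) (hC'v : C' = Finset.image v Finset.univ)
    (C : Fin ℓ → Finset V)
    (hcl : ∀ i, G.IsClique ↑(C i))
    (hmax : ∀ i, ∀ D : Finset V, G.IsClique ↑D → C i ⊆ D → C i = D)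
    (hint : ∀ i, C i ∩ C' = {v i})
    (hcard : ∀ i, ℓ ≤ (C i).card)
    (hdisj : ∀ i j, i ≠ j → Disjoint (C i) (C j))
    (hbig : ∃ i, ℓ < (C i).card) :
    ∃ S : Finset V, (∀ x ∈ S, ∃ i, x ∈ C i) ∧ Disjoint S C' ∧
      (∀ x ∈ S, ∀ y ∈ S, ¬ G.Adj x y) ∧ S.card = ℓ ∧
      (∀ x ∈ C', ∃ s ∈ S, G.Adj s x) := by
  obtain ⟨i₀, hi₀⟩ := hbig
  have hdisj' : Pairwise (Disjoint on C) := fun i j => hdisj i j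
  have hrest : #(univ.erase i₀) + 1 = ℓ := by
    rw [card_erase_add_one (mem_univ i₀), card_univ, Fintype.card_fin]
  obtain ⟨f, hf⟩ := G.exists_isStableTransversal (v := v) hdf hcl hmax hdisj' (univ.erase i₀)
    fun i _ => by have := hcard i; omega
  obtain ⟨g, hg⟩ := hf.exists_insert hdf hcl hmax hdisj' (notMem_erase i₀ univ) (by omega)
  rw [insert_erase (mem_univ i₀)] at hg
  have hvC : ∀ i, v i ∈ C i := fun i => (mem_inter.1 ((hint i).symm ▸ mem_singleton_self _)).1
  refine ⟨univ.image g, ?_, ?_, ?_, ?_, ?_⟩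
  · simp only [mem_image, mem_univ, true_and, forall_exists_index, forall_apply_eq_imp_iff]
    exact fun i => ⟨i, (hg.1 i (mem_univ i)).1⟩
  · simp only [disjoint_left, mem_image, mem_univ, true_and, forall_exists_index,
      forall_apply_eq_imp_iff]
    intro i hgi
    have := hint i ▸ mem_inter.2 ⟨(hg.1 i (mem_univ i)).1, hgi⟩
    exact (hg.1 i (mem_univ i)).2 (mem_singleton.1 this)
  · simp only [mem_image, mem_univ, true_and, forall_exists_index, forall_apply_eq_imp_iff]
    exact fun i j => hg.2 i (mem_univ i) j (mem_univ j)
  · rw [hg.card_image hdisj', card_univ, Fintype.card_fin]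
  · simp only [hC'v, mem_image, mem_univ, true_and, exists_exists_eq_and, forall_exists_index,
      forall_apply_eq_imp_iff]
    exact fun i => ⟨i, hcl i (hg.1 i (mem_univ i)).1 (hvC i) (hg.1 i (mem_univ i)).2⟩

/-- if moreover some C_i has more than ℓ vertices, there is a stable set of
size ℓ disjoint from C' dominating all of C'. -/
theorem stmt9 {V : Type*} [DecidableEq V] (G : SimpleGraph V) (hdf : DiamondFree G)
    (ℓ : ℕ) (hℓ : 2 ≤ ℓ) (v : Fin ℓ → V) (hv : Function.Injective v)
    (C' : Finset V) (hC'v : C' = Finset.image v Finset.univ) (hC' : G.IsClique ↑C')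
    (C : Fin ℓ → Finset V)
    (hcl : ∀ i, G.IsClique ↑(C i))
    (hmax : ∀ i, ∀ D : Finset V, G.IsClique ↑D → C i ⊆ D → C i = D)
    (hint : ∀ i, C i ∩ C' = {v i})
    (hcard : ∀ i, ℓ ≤ (C i).card)
    (hdisj : ∀ i j, i ≠ j → Disjoint (C i) (C j))
    (hbig : ∃ i, ℓ < (C i).card) :
    ∃ S : Finset V, (∀ x ∈ S, ∃ i, x ∈ C i) ∧ Disjoint S C' ∧
      (∀ x ∈ S, ∀ y ∈ S, ¬ G.Adj x y) ∧ S.card = ℓ ∧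
      (∀ x ∈ C', ∃ s ∈ S, G.Adj s x) :=
  stmt9_general G hdf ℓ v C' hC'v C hcl hmax hint hcard hdisj hbig
end

section
/- The line graph of K_{n,n} is a CIS graph for every n ≥ 1: every maximal clique of L(K_{n,n}) intersects every maximal stable set. -/
def edg (n : ℕ) (a b : Fin n) : (completeBipartiteGraph (Fin n) (Fin n)).edgeSet :=
  ⟨s(Sum.inl a, Sum.inr b), by simp⟩

lemma edg_inj {n : ℕ} {a b a' b' : Fin n} : edg n a b = edg n a' b' ↔ a = a' ∧ b = b' := by
  simp [edg, Subtype.ext_iff, Sym2.eq_iff]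

lemma edg_surj {n : ℕ} (e : (completeBipartiteGraph (Fin n) (Fin n)).edgeSet) :
    ∃ a b, e = edg n a b := by
  obtain ⟨e, he⟩ := e
  induction e using Sym2.ind with
  | _ u v =>
    rw [SimpleGraph.mem_edgeSet] at he
    rcases he with ⟨h1, h2⟩ | ⟨h1, h2⟩
    · obtain ⟨a, rfl⟩ := Sum.isLeft_iff.mp h1
      obtain ⟨b, rfl⟩ := Sum.isRight_iff.mp h2
      exact ⟨a, b, rfl⟩
    · obtain ⟨b, rfl⟩ := Sum.isRight_iff.mp h1
      obtain ⟨a, rfl⟩ := Sum.isLeft_iff.mp h2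
      exact ⟨a, b, by simp [edg, Subtype.ext_iff, Sym2.eq_swap]⟩

lemma adj_iff {n : ℕ} {a b a' b' : Fin n} :
    (completeBipartiteGraph (Fin n) (Fin n)).lineGraph.Adj (edg n a b) (edg n a' b') ↔
      ¬(a = a' ∧ b = b') ∧ (a = a' ∨ b = b') := by
  rw [SimpleGraph.lineGraph_adj_iff_exists]
  simp [edg, Subtype.ext_iff, Sym2.eq_iff]

/-- L(K_{n,n}) is CIS for every n ≥ 1. -/
theorem stmt10 (n : ℕ) (hn : 1 ≤ n) :
    ∀ C S : Set ((completeBipartiteGraph (Fin n) (Fin n)).edgeSet),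
      IsMaxClique (completeBipartiteGraph (Fin n) (Fin n)).lineGraph C →
      IsMaxStable (completeBipartiteGraph (Fin n) (Fin n)).lineGraph S →
      (C ∩ S).Nonempty := by
  intro C S hC hS
  by_contra hdis
  rw [Set.not_nonempty_iff_eq_empty] at hdis
  have hdisj : ∀ x, x ∈ C → x ∉ S := by
    intro x hx hxS
    exact absurd (Set.mem_inter hx hxS) (by rw [hdis]; exact Set.notMem_empty x)
  -- every vertex not in S is adjacent to some member of S
  have hSadj : ∀ v, v ∉ S → ∃ s ∈ S, (completeBipartiteGraph (Fin n) (Fin n)).lineGraph.Adj v s := by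
    intro v hv
    by_contra hno
    push_neg at hno
    have hst : IsStable (completeBipartiteGraph (Fin n) (Fin n)).lineGraph (S ∪ {v}) := by
      intro u hu w hw
      rcases hu with hu | hu <;> rcases hw with hw | hw
      · exact hS.1 u hu w hw
      · intro h
        exact hno u hu (by rw [Set.mem_singleton_iff] at hw; exact hw ▸ h.symm)
      · intro h
        exact hno w hw (by rw [Set.mem_singleton_iff] at hu; exact hu ▸ h)
      · rw [Set.mem_singleton_iff] at hu hw
        subst hu; subst hw; exact (completeBipartiteGraph (Fin n) (Fin n)).lineGraph.irrefl
    have := hS.2 _ hst Set.subset_union_left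
    exact hv (this ▸ Set.mem_union_right S rfl : v ∈ S)
  -- C is nonempty
  have hCne : C.Nonempty := by
    by_contra h
    rw [Set.not_nonempty_iff_eq_empty] at h
    have := hC.2 {edg n ⟨0, hn⟩ ⟨0, hn⟩} (SimpleGraph.isClique_singleton _)
      (h ▸ Set.empty_subset _)
    rw [h] at this
    exact absurd this.symm (Set.singleton_ne_empty _)
  obtain ⟨c, hc⟩ := hCne
  obtain ⟨i, j, rfl⟩ := edg_surj c
  -- C is a full row or a full column
  have key : (∀ b, edg n i b ∈ C) ∨ (∀ a, edg n a j ∈ C) := by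
    by_cases hrow : ∀ x ∈ C, ∃ b, x = edg n i b
    · left
      have hclique : (completeBipartiteGraph (Fin n) (Fin n)).lineGraph.IsClique {x | ∃ b, x = edg n i b} := by
        intro x hx y hy hxy
        obtain ⟨b, rfl⟩ := hx
        obtain ⟨b', rfl⟩ := hy
        rw [adj_iff]
        have : b ≠ b' := fun h => hxy (by rw [h])
        exact ⟨fun h => this h.2, Or.inl rfl⟩
      have := hC.2 _ hclique (fun x hx => hrow x hx)
      intro b
      rw [this]
      exact ⟨b, rfl⟩
    · right
      push_neg at hrow
      obtain ⟨x, hx, hxne⟩ := hrow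
      obtain ⟨a', b', rfl⟩ := edg_surj x
      have ha' : a' ≠ i := by
        intro h; exact hxne b' (by rw [h])
      have hxc : edg n a' b' ≠ edg n i j := fun h => ha' (edg_inj.mp h).1
      have hb' : b' = j := by
        have := hC.1 hx hc hxc
        rw [adj_iff] at this
        rcases this.2 with h | h
        · exact absurd h ha'
        · exact h
      rw [hb'] at hx hxc
      clear hxne hb'
      have hcol : ∀ y ∈ C, ∃ a, y = edg n a j := by
        intro y hy
        obtain ⟨p, q, rfl⟩ := edg_surj y
        refine ⟨p, ?_⟩
        by_cases hq : q = j
        · rw [hq]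
        · exfalso
          have hyc : edg n p q ≠ edg n i j := fun h => hq (edg_inj.mp h).2
          have hyx : edg n p q ≠ edg n a' j := fun h => hq (edg_inj.mp h).2
          have h1 := hC.1 hy hc hyc
          have h2 := hC.1 hy hx hyx
          rw [adj_iff] at h1 h2
          rcases h1.2 with h | h
          · rcases h2.2 with h' | h'
            · exact ha' (h ▸ h'.symm)
            · exact hq h'
          · exact hq h
      have hclique : (completeBipartiteGraph (Fin n) (Fin n)).lineGraph.IsClique {y | ∃ a, y = edg n a j} := by
        intro x hx y hy hxy
        obtain ⟨a1, rfl⟩ := hx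
        obtain ⟨a2, rfl⟩ := hy
        rw [adj_iff]
        have : a1 ≠ a2 := fun h => hxy (by rw [h])
        exact ⟨fun h => this h.1, Or.inr rfl⟩
      have := hC.2 _ hclique (fun y hy => hcol y hy)
      intro a
      rw [this]
      exact ⟨a, rfl⟩
  -- in either case, find a contradiction using that S must "cover"
  rcases key with hk | hk
  · -- C contains the full row i; S misses row i
    -- for each column b there is s ∈ S in column b, with row ≠ i
    have hcover : ∀ b : Fin n, ∃ r : Fin n, r ≠ i ∧ edg n r b ∈ S := by
      intro b
      obtain ⟨s, hsS, hadj⟩ := hSadj (edg n i b) (hdisj _ (hk b))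
      obtain ⟨r, b2, rfl⟩ := edg_surj s
      rw [adj_iff] at hadj
      have hri : r ≠ i := by
        intro h
        subst h
        exact hdisj _ (hk b2) hsS
      rcases hadj.2 with h | h
      · exact absurd h.symm hri
      · exact ⟨r, hri, h ▸ hsS⟩
    choose r hri hrS using hcover
    have hinj : Function.Injective r := by
      intro b1 b2 h
      by_contra hne
      have := hS.1 _ (hrS b1) _ (hrS b2)
      rw [adj_iff] at this
      exact this ⟨fun hh => hne hh.2, Or.inl h⟩
    obtain ⟨b, hb⟩ := Finite.surjective_of_injective hinj i
    exact hri b hb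
  · -- symmetric: C contains the full column j
    have hcover : ∀ a : Fin n, ∃ cc : Fin n, cc ≠ j ∧ edg n a cc ∈ S := by
      intro a
      obtain ⟨s, hsS, hadj⟩ := hSadj (edg n a j) (hdisj _ (hk a))
      obtain ⟨a2, cc, rfl⟩ := edg_surj s
      rw [adj_iff] at hadj
      have hcj : cc ≠ j := by
        intro h
        subst h
        exact hdisj _ (hk a2) hsS
      rcases hadj.2 with h | h
      · exact ⟨cc, hcj, h ▸ hsS⟩
      · exact absurd h.symm hcj
    choose cc hcj hcS using hcover
    have hinj : Function.Injective cc := by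
      intro a1 a2 h
      by_contra hne
      have := hS.1 _ (hcS a1) _ (hcS a2)
      rw [adj_iff] at this
      exact this ⟨fun hh => hne hh.1, Or.inr h⟩
    obtain ⟨a, ha⟩ := Finite.surjective_of_injective hinj j
    exact hcj a ha
end

section
/- If G is a graph in which every maximal clique is simplicial (a clique simplicial graph), then α(G) · ω(G) ≥ |V(G)|, where α is the maximum size of a stable set and ω the maximum size of a clique. -/
/-- Maximum size of a stable (independent) set. -/
noncomputable def alphaNum {V : Type*} (G : SimpleGraph V) : ℕ :=
  sSup {k | ∃ s : Finset V, s.card = k ∧ ∀ u ∈ s, ∀ w ∈ s, ¬ G.Adj u w}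

/-- Maximum size of a clique. -/
noncomputable def omegaNum {V : Type*} (G : SimpleGraph V) : ℕ :=
  sSup {k | ∃ s : Finset V, G.IsNClique k s}

open Finset

lemma exists_maxclique_mem {V : Type*} [Fintype V] (G : SimpleGraph V) (u : V) :
    ∃ C : Set V, IsMaxClique G C ∧ u ∈ C := by
  classical
  let T : Finset (Finset V) := Finset.univ.filter (fun s => G.IsClique (s : Set V) ∧ u ∈ s)
  have hne : T.Nonempty := ⟨{u}, by simp [T]⟩
  obtain ⟨s, hs, hmax⟩ := T.exists_max_image Finset.card hne
  simp only [T, mem_filter, mem_univ, true_and] at hs hmax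
  refine ⟨(s : Set V), ⟨hs.1, ?_⟩, by exact_mod_cast hs.2⟩
  intro D hD hsub
  have hDf : D.Finite := Set.toFinite D
  have hsub' : s ⊆ hDf.toFinset := by
    intro x hx
    rw [Set.Finite.mem_toFinset]
    exact hsub hx
  have hclD : G.IsClique (hDf.toFinset : Set V) := by
    rwa [Set.Finite.coe_toFinset]
  have hcard : hDf.toFinset.card ≤ s.card := by
    apply hmax
    refine ⟨hclD, ?_⟩
    rw [Set.Finite.mem_toFinset]
    exact hsub (by exact_mod_cast hs.2)
  have heq : s = hDf.toFinset := Finset.eq_of_subset_of_card_le hsub' hcard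
  calc (s : Set V) = (hDf.toFinset : Set V) := by rw [heq]
    _ = D := Set.Finite.coe_toFinset hDf

lemma closed_nbhd_eq_of_adj {V : Type*} (G : SimpleGraph V) {v w : V}
    (hv : G.IsClique (insert v (G.neighborSet v)))
    (hw : G.IsClique (insert w (G.neighborSet w)))
    (hadj : G.Adj v w) :
    insert v (G.neighborSet v) = insert w (G.neighborSet w) := by
  have key : ∀ a b : V, G.Adj a b → G.IsClique (insert a (G.neighborSet a)) →
      insert a (G.neighborSet a) ⊆ insert b (G.neighborSet b) := by
    intro a b hab hca x hx
    rcases hx with rfl | hx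
    · exact Set.mem_insert_iff.mpr (Or.inr hab.symm)
    · by_cases hxb : x = b
      · exact hxb ▸ Set.mem_insert _ _
      · have hbmem : b ∈ insert a (G.neighborSet a) := Or.inr hab
        have hxmem : x ∈ insert a (G.neighborSet a) := Or.inr hx
        have := hca hxmem hbmem hxb
        exact Set.mem_insert_iff.mpr (Or.inr this.symm)
  exact Set.Subset.antisymm (key v w hadj hv) (key w v hadj.symm hw)

/-- if every maximal clique of G is simplicial, then α(G)·ω(G) ≥ |V(G)|. -/
theorem stmt12 {V : Type*} [Fintype V] (G : SimpleGraph V)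
    (h : ∀ C : Set V, IsMaxClique G C → ∃ v ∈ C, insert v (G.neighborSet v) = C) :
    Fintype.card V ≤ alphaNum G * omegaNum G := by
  classical
  cases isEmpty_or_nonempty V with
  | inl hE => simp [Fintype.card_eq_zero]
  | inr hNE =>
  haveI : Inhabited V := Classical.inhabited_of_nonempty hNE
  -- choose a maximal clique for each vertex
  have h1 : ∀ u : V, ∃ C, IsMaxClique G C ∧ u ∈ C := exists_maxclique_mem G
  choose Cl hCl hmem using h1
  -- simplicial vertex of a clique (depends only on the clique)
  have h2 : ∀ C : Set V, IsMaxClique G C → ∃ v, v ∈ C ∧ insert v (G.neighborSet v) = C := by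
    intro C hC
    obtain ⟨v, hv, he⟩ := h C hC
    exact ⟨v, hv, he⟩
  let g : Set V → V := fun C => if hC : IsMaxClique G C then (h2 C hC).choose else default
  have hg : ∀ C (hC : IsMaxClique G C), g C ∈ C ∧ insert (g C) (G.neighborSet (g C)) = C := by
    intro C hC
    simp only [g, dif_pos hC]
    exact (h2 C hC).choose_spec
  set f : V → V := fun u => g (Cl u) with hf
  have hfeq : ∀ u, insert (f u) (G.neighborSet (f u)) = Cl u := fun u => (hg _ (hCl u)).2
  -- the set of chosen simplicial vertices
  set S : Finset V := Finset.image f Finset.univ with hS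
  -- closed neighborhoods of vertices in S are cliques
  have hclique : ∀ u : V, G.IsClique (insert (f u) (G.neighborSet (f u))) := by
    intro u
    rw [hfeq u]
    exact (hCl u).1
  -- S is stable
  have hstable : ∀ a ∈ S, ∀ b ∈ S, ¬ G.Adj a b := by
    intro a ha b hb hadj
    simp only [hS, Finset.mem_image, Finset.mem_univ, true_and] at ha hb
    obtain ⟨u, rfl⟩ := ha
    obtain ⟨u', rfl⟩ := hb
    have hnb := closed_nbhd_eq_of_adj G (hclique u) (hclique u') hadj
    have hCeq : Cl u = Cl u' := by rw [← hfeq u, ← hfeq u', hnb]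
    have : f u = f u' := by simp only [hf, hCeq]
    rw [this] at hadj
    exact G.irrefl hadj
  -- bound on alphaNum
  have hbddA : BddAbove {k | ∃ s : Finset V, s.card = k ∧ ∀ u ∈ s, ∀ w ∈ s, ¬ G.Adj u w} := by
    refine ⟨Fintype.card V, ?_⟩
    rintro k ⟨s, rfl, -⟩
    exact Finset.card_le_univ s
  have hSalpha : S.card ≤ alphaNum G := le_csSup hbddA ⟨S, rfl, hstable⟩
  -- bound on omegaNum
  have hbddO : BddAbove {k | ∃ s : Finset V, G.IsNClique k s} := by
    refine ⟨Fintype.card V, ?_⟩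
    rintro k ⟨s, hs⟩
    rw [← hs.2]
    exact Finset.card_le_univ s
  have homega : ∀ v ∈ S, (insert v (G.neighborFinset v)).card ≤ omegaNum G := by
    intro v hv
    apply le_csSup hbddO
    refine ⟨insert v (G.neighborFinset v), ?_, rfl⟩
    simp only [hS, Finset.mem_image, Finset.mem_univ, true_and] at hv
    obtain ⟨u, rfl⟩ := hv
    have : ((insert (f u) (G.neighborFinset (f u)) : Finset V) : Set V)
        = insert (f u) (G.neighborSet (f u)) := by
      ext x; simp
    rw [SimpleGraph.isClique_iff] at *
    rw [this]
    exact hclique u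
  -- covering
  have hcover : (Finset.univ : Finset V) ⊆ S.biUnion (fun v => insert v (G.neighborFinset v)) := by
    intro u _
    rw [Finset.mem_biUnion]
    refine ⟨f u, Finset.mem_image_of_mem f (Finset.mem_univ u), ?_⟩
    have hu : u ∈ insert (f u) (G.neighborSet (f u)) := by
      rw [hfeq u]; exact hmem u
    rcases hu with heq | hu
    · rw [Finset.mem_insert]; exact Or.inl heq
    · exact Finset.mem_insert_of_mem (by rwa [SimpleGraph.mem_neighborFinset])
  calc Fintype.card V = (Finset.univ : Finset V).card := rfl
    _ ≤ (S.biUnion (fun v => insert v (G.neighborFinset v))).card :=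
        Finset.card_le_card hcover
    _ ≤ ∑ v ∈ S, (insert v (G.neighborFinset v)).card := Finset.card_biUnion_le
    _ ≤ ∑ _v ∈ S, omegaNum G := Finset.sum_le_sum homega
    _ = S.card * omegaNum G := by rw [Finset.sum_const, smul_eq_mul]
    _ ≤ alphaNum G * omegaNum G := Nat.mul_le_mul_right _ hSalpha
end

section
/- Every connected diamond-free CIS graph G satisfies α(G) · ω(G) ≥ |V(G)|; consequently G has a clique or a stable set of size at least |V(G)|^{1/2}. -/
open Finset
open scoped Classical
set_option linter.unusedSectionVars false
set_option maxHeartbeats 1000000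

section Aux

variable {V : Type*} [Fintype V] {G : SimpleGraph V}

/-- stable finsets -/
def StabF (G : SimpleGraph V) (s : Finset V) : Prop := ∀ u ∈ s, ∀ w ∈ s, ¬ G.Adj u w

lemma bddAbove_alphaSet :
    BddAbove {k | ∃ s : Finset V, s.card = k ∧ ∀ u ∈ s, ∀ w ∈ s, ¬ G.Adj u w} := by
  refine ⟨Fintype.card V, ?_⟩
  rintro k ⟨s, rfl, -⟩
  exact s.card_le_univ

lemma bddAbove_omegaSet :
    BddAbove {k | ∃ s : Finset V, G.IsNClique k s} := by
  refine ⟨Fintype.card V, ?_⟩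
  rintro k ⟨s, hs⟩
  rw [← hs.card_eq]
  exact s.card_le_univ

lemma stabF_card_le_alpha {s : Finset V} (h : StabF G s) : s.card ≤ alphaNum G :=
  le_csSup bddAbove_alphaSet ⟨s, rfl, h⟩

lemma clique_card_le_omega {s : Finset V} (h : G.IsClique (s : Set V)) :
    s.card ≤ omegaNum G :=
  le_csSup bddAbove_omegaSet ⟨s, ⟨h, rfl⟩⟩

lemma exists_maxcard_stable :
    ∃ S : Finset V, StabF G S ∧ ∀ t : Finset V, StabF G t → t.card ≤ S.card := by
  obtain ⟨S, hS, hmax⟩ := Finset.exists_max_image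
    (Finset.univ.powerset.filter (fun s => StabF G s)) Finset.card
    ⟨∅, by simp [StabF]⟩
  refine ⟨S, (Finset.mem_filter.1 hS).2, fun t ht => ?_⟩
  exact hmax t (Finset.mem_filter.2 ⟨Finset.mem_powerset.2 t.subset_univ, ht⟩)

/-- any stable finset extends to a finset that is a maximal stable SET -/
lemma exists_maximal_stable_ext (b : Finset V) (hb : StabF G b) :
    ∃ T : Finset V, StabF G T ∧ b ⊆ T ∧ IsMaxStable G (T : Set V) := by
  obtain ⟨T, hT, hmax⟩ := Finset.exists_max_image
    (Finset.univ.powerset.filter (fun s => StabF G s ∧ b ⊆ s)) Finset.card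
    ⟨b, by simp [hb]⟩
  rw [Finset.mem_filter] at hT
  obtain ⟨-, hTstab, hbT⟩ := hT
  refine ⟨T, hTstab, hbT, ?_, ?_⟩
  · intro u hu w hw
    exact hTstab u hu w hw
  · intro T' hT' hsub
    by_contra hne
    have : ∃ u ∈ T', u ∉ (T : Set V) := by
      by_contra h
      push_neg at h
      exact hne (le_antisymm hsub h)
    obtain ⟨u, huT', huT⟩ := this
    have hstab : StabF G (insert u T) := by
      intro a ha w hw
      have ha' : a ∈ T' := by
        rcases Finset.mem_insert.1 ha with rfl | h
        · exact huT'
        · exact hsub h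
      have hw' : w ∈ T' := by
        rcases Finset.mem_insert.1 hw with rfl | h
        · exact huT'
        · exact hsub h
      exact hT' a ha' w hw'
    have hcard := hmax (insert u T) (Finset.mem_filter.2
      ⟨Finset.mem_powerset.2 (insert u T).subset_univ,
        hstab, hbT.trans (Finset.subset_insert _ _)⟩)
    rw [Finset.card_insert_of_notMem (by simpa using huT)] at hcard
    omega


/-- diamond-freeness: adjacency within a neighbourhood is transitive-ish -/
lemma adj_trans_of_df (hdf : DiamondFree G) {x a b c : V}
    (hxa : G.Adj x a) (hxb : G.Adj x b) (hxc : G.Adj x c)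
    (hab : G.Adj a b) (hbc : G.Adj b c) : a = c ∨ G.Adj a c := by
  by_contra h
  push_neg at h
  obtain ⟨hne, hnadj⟩ := h
  exact hdf ⟨b, x, a, c, (G.ne_of_adj hxb).symm, G.ne_of_adj hab.symm,
    G.ne_of_adj hbc, G.ne_of_adj hxa, G.ne_of_adj hxc, hne,
    hxb.symm, hab.symm, hbc, hxa, hxc, hnadj⟩

/-- the class of `u` in the neighbourhood of `x` -/
noncomputable def Kl (G : SimpleGraph V) (x u : V) : Finset V :=
  Finset.univ.filter (fun w => G.Adj x w ∧ (w = u ∨ G.Adj w u))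

lemma mem_Kl {x u w : V} : w ∈ Kl G x u ↔ G.Adj x w ∧ (w = u ∨ G.Adj w u) := by
  simp [Kl]

lemma u_mem_Kl {x u : V} (h : G.Adj x u) : u ∈ Kl G x u := mem_Kl.2 ⟨h, Or.inl rfl⟩

lemma x_notMem_Kl {x u : V} : x ∉ Kl G x u := by
  simp [Kl]

/-- members of a class are pairwise equal-or-adjacent -/
lemma Kl_pairwise (hdf : DiamondFree G) {x u a b : V} (hu : G.Adj x u)
    (ha : a ∈ Kl G x u) (hb : b ∈ Kl G x u) : a = b ∨ G.Adj a b := by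
  obtain ⟨hxa, ha'⟩ := mem_Kl.1 ha
  obtain ⟨hxb, hb'⟩ := mem_Kl.1 hb
  rcases ha' with rfl | hau
  · rcases hb' with rfl | hbu
    · exact Or.inl rfl
    · exact Or.inr hbu.symm
  · rcases hb' with rfl | hbu
    · exact Or.inr hau
    · exact adj_trans_of_df hdf hxa hu hxb hau hbu.symm

lemma Kl_clique (hdf : DiamondFree G) {x u : V} (hu : G.Adj x u) :
    G.IsClique ((insert x (Kl G x u) : Finset V) : Set V) := by
  intro a ha b hb hne
  simp only [Finset.coe_insert, Set.mem_insert_iff, Finset.mem_coe] at ha hb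
  rcases ha with rfl | ha
  · rcases hb with rfl | hb
    · exact absurd rfl hne
    · exact (mem_Kl.1 hb).1
  · rcases hb with rfl | hb
    · exact (mem_Kl.1 ha).1.symm
    · rcases Kl_pairwise hdf hu ha hb with h | h
      · exact absurd h hne
      · exact h

lemma Kl_maxclique (hdf : DiamondFree G) {x u : V} (hu : G.Adj x u) :
    IsMaxClique G ((insert x (Kl G x u) : Finset V) : Set V) := by
  refine ⟨Kl_clique hdf hu, fun D hD hsub => ?_⟩
  refine Set.Subset.antisymm hsub ?_
  intro d hd
  by_contra hdC
  simp only [Finset.coe_insert, Set.mem_insert_iff, Finset.mem_coe] at hdC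
  push_neg at hdC
  obtain ⟨hdx, hdK⟩ := hdC
  have hxD : x ∈ D := hsub (by simp)
  have huD : u ∈ D := hsub (by simp [u_mem_Kl hu])
  have hdxadj : G.Adj d x := hD hd hxD hdx
  have hdu : d ≠ u := fun h => hdK (by rw [h]; exact u_mem_Kl hu)
  have hduadj : G.Adj d u := hD hd huD hdu
  exact hdK (mem_Kl.2 ⟨hdxadj.symm, Or.inr hduadj⟩)



lemma core_ineq (hdf : DiamondFree G)
    (hCIS : ∀ C S : Set V, IsMaxClique G C → IsMaxStable G S → (C ∩ S).Nonempty)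
    {S : Finset V} (hS : StabF G S) (hSmax : ∀ t : Finset V, StabF G t → t.card ≤ S.card)
    {x v : V} (hxS : x ∈ S) (hxv : G.Adj x v) :
    (Finset.univ.filter (fun w => G.Adj x w)).card
      ≤ (omegaNum G - 1) * (S.filter (fun y => G.Adj v y)).card := by
  set Av := S.filter (fun y => G.Adj v y) with hAv
  set Nx := Finset.univ.filter (fun w => G.Adj x w) with hNx
  have hbase : StabF G (insert v (S \ Av)) := by
    intro a ha w hw
    rcases Finset.mem_insert.1 ha with rfl | ha
    · rcases Finset.mem_insert.1 hw with rfl | hw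
      · exact G.irrefl
      · intro hadj
        obtain ⟨hwS, hwAv⟩ := Finset.mem_sdiff.1 hw
        exact hwAv (Finset.mem_filter.2 ⟨hwS, hadj⟩)
    · rcases Finset.mem_insert.1 hw with rfl | hw
      · intro hadj
        obtain ⟨haS, haAv⟩ := Finset.mem_sdiff.1 ha
        exact haAv (Finset.mem_filter.2 ⟨haS, hadj.symm⟩)
      · exact hS a (Finset.mem_sdiff.1 ha).1 w (Finset.mem_sdiff.1 hw).1
  obtain ⟨T, hTstab, hbT, hTmax⟩ := exists_maximal_stable_ext _ hbase
  have hvT : v ∈ T := hbT (Finset.mem_insert_self _ _)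
  have hxT : x ∉ T := fun hxT => hTstab x hxT v hvT hxv
  have hSsubT : S \ Av ⊆ T := fun w hw => hbT (Finset.mem_insert_of_mem hw)
  set R := T.filter (fun w => G.Adj x w) with hR
  -- Claim 1 : R.card ≤ Av.card
  have hdisj : Disjoint (S \ Av) R := by
    rw [Finset.disjoint_left]
    intro w hw hwR
    obtain ⟨hwS, -⟩ := Finset.mem_sdiff.1 hw
    obtain ⟨-, hadj⟩ := Finset.mem_filter.1 hwR
    exact hS x hxS w hwS hadj
  have hstab2 : StabF G ((S \ Av) ∪ R) := by
    intro a ha w hw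
    have ha' : a ∈ T := by
      rcases Finset.mem_union.1 ha with h | h
      · exact hSsubT h
      · exact (Finset.mem_filter.1 h).1
    have hw' : w ∈ T := by
      rcases Finset.mem_union.1 hw with h | h
      · exact hSsubT h
      · exact (Finset.mem_filter.1 h).1
    exact hTstab a ha' w hw'
  have hAvS : Av ⊆ S := Finset.filter_subset _ _
  have hAvcard : Av.card ≤ S.card := Finset.card_le_card hAvS
  have hclaim1 : R.card ≤ Av.card := by
    have h1 := hSmax _ hstab2
    rw [Finset.card_union_of_disjoint hdisj, Finset.card_sdiff_of_subset hAvS] at h1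
    omega
  -- Claim 2 : Nx.card ≤ (W-1) * R.card
  have hex : ∀ u ∈ Nx, ∃ r, r ∈ R ∧ (r = u ∨ G.Adj r u) := by
    intro u hu
    have hxu : G.Adj x u := (Finset.mem_filter.1 hu).2
    obtain ⟨r, hrC, hrT⟩ := hCIS _ _ (Kl_maxclique hdf hxu) hTmax
    simp only [Finset.coe_insert, Set.mem_insert_iff, Finset.mem_coe] at hrC
    have hrT' : r ∈ T := hrT
    rcases hrC with rfl | hrK
    · exact absurd hrT' hxT
    · obtain ⟨hxr, hr⟩ := mem_Kl.1 hrK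
      exact ⟨r, Finset.mem_filter.2 ⟨hrT', hxr⟩, hr⟩
  have hclaim2 : Nx.card ≤ (omegaNum G - 1) * R.card := by
    classical
    set f : V → V := fun u => if h : ∃ r, r ∈ R ∧ (r = u ∨ G.Adj r u) then h.choose else u
      with hf
    have hmaps : ∀ u ∈ Nx, f u ∈ R := by
      intro u hu
      have h := hex u hu
      simp only [hf, dif_pos h]
      exact h.choose_spec.1
    have hfib : ∀ r ∈ R, (Nx.filter (fun u => f u = r)).card ≤ omegaNum G - 1 := by
      intro r hrR
      have hxr : G.Adj x r := (Finset.mem_filter.1 hrR).2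
      have hsub : Nx.filter (fun u => f u = r) ⊆ Kl G x r := by
        intro u hu
        obtain ⟨huNx, hfu⟩ := Finset.mem_filter.1 hu
        have h := hex u huNx
        have hprop := h.choose_spec
        rw [hf] at hfu
        simp only [dif_pos h] at hfu
        rw [hfu] at hprop
        have hxu : G.Adj x u := (Finset.mem_filter.1 huNx).2
        rcases hprop.2 with rfl | hadj
        · exact u_mem_Kl hxu
        · exact mem_Kl.2 ⟨hxu, Or.inr hadj.symm⟩
      have hcard : (Kl G x r).card + 1 ≤ omegaNum G := by
        have hclique := Kl_clique hdf hxr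
        have := clique_card_le_omega hclique
        rwa [Finset.card_insert_of_notMem x_notMem_Kl] at this
      have := Finset.card_le_card hsub
      omega
    exact Finset.card_le_mul_card_image_of_maps_to hmaps _ hfib
  exact hclaim2.trans (Nat.mul_le_mul_left _ hclaim1)

lemma main_count (hdf : DiamondFree G)
    (hCIS : ∀ C S : Set V, IsMaxClique G C → IsMaxStable G S → (C ∩ S).Nonempty)
    (hne : Nonempty V) :
    Fintype.card V ≤ alphaNum G * omegaNum G := by
  obtain ⟨S, hS, hSmax⟩ := exists_maxcard_stable (G := G)
  set W := omegaNum G with hW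
  have hW1 : 1 ≤ W := by
    obtain ⟨v0⟩ := hne
    have : ({v0} : Finset V).card ≤ W := clique_card_le_omega (by simp)
    simpa using this
  -- positivity of Av for v outside S
  have hAvpos : ∀ v, v ∉ S → 0 < (S.filter (fun y => G.Adj v y)).card := by
    intro v hv
    rw [Finset.card_pos]
    by_contra h
    rw [Finset.not_nonempty_iff_eq_empty, Finset.filter_eq_empty_iff] at h
    have hstab : StabF G (insert v S) := by
      intro a ha w hw
      rcases Finset.mem_insert.1 ha with h1 | ha'
      · rcases Finset.mem_insert.1 hw with h2 | hw'
        · rw [h1, h2]; exact G.irrefl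
        · rw [h1]; exact h hw'
      · rcases Finset.mem_insert.1 hw with h2 | hw'
        · rw [h2]; exact fun hadj => h ha' hadj.symm
        · exact hS a ha' w hw'
    have := hSmax _ hstab
    rw [Finset.card_insert_of_notMem hv] at this
    omega
  set q : V → ℚ := fun v => 1 / ((S.filter (fun y => G.Adj v y)).card : ℚ) with hq
  -- per-x bound
  have key : ∀ x ∈ S, (∑ v ∈ Finset.univ.filter (fun w => G.Adj x w), q v) ≤ (W : ℚ) - 1 := by
    intro x hxS
    set Nx := Finset.univ.filter (fun w => G.Adj x w) with hNx
    rcases Nx.eq_empty_or_nonempty with he | hne'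
    · rw [he]
      simp only [Finset.sum_empty]
      have : (1:ℚ) ≤ (W:ℚ) := by exact_mod_cast hW1
      linarith
    · have hNpos : (0:ℚ) < (Nx.card : ℚ) := by
        exact_mod_cast Finset.card_pos.2 hne'
      have hterm : ∀ v ∈ Nx, q v ≤ ((W:ℚ) - 1) / (Nx.card : ℚ) := by
        intro v hv
        have hxv : G.Adj x v := (Finset.mem_filter.1 hv).2
        have hcore := core_ineq hdf hCIS hS hSmax hxS hxv
        have hApos : (0:ℚ) < ((S.filter (fun y => G.Adj v y)).card : ℚ) := by
          have : x ∈ S.filter (fun y => G.Adj v y) :=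
            Finset.mem_filter.2 ⟨hxS, hxv.symm⟩
          exact_mod_cast Finset.card_pos.2 ⟨x, this⟩
        rw [hq]
        rw [div_le_div_iff₀ hApos hNpos]
        have hcast : ((W:ℚ) - 1) = ((W - 1 : ℕ) : ℚ) := by
          rw [Nat.cast_sub hW1]; norm_num
        rw [one_mul, hcast]
        exact_mod_cast hcore
      calc (∑ v ∈ Nx, q v) ≤ ∑ _v ∈ Nx, ((W:ℚ) - 1) / (Nx.card : ℚ) :=
            Finset.sum_le_sum hterm
        _ = (Nx.card : ℚ) * (((W:ℚ) - 1) / (Nx.card : ℚ)) := by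
            rw [Finset.sum_const, nsmul_eq_mul]
        _ = (W:ℚ) - 1 := by
            field_simp
  -- double counting
  have hswap : (((Finset.univ \ S).card : ℚ)) ≤ (S.card : ℚ) * ((W:ℚ) - 1) := by
    have e1 : ((Finset.univ \ S).card : ℚ) = ∑ v ∈ Finset.univ \ S, (1:ℚ) := by
      rw [Finset.sum_const, nsmul_eq_mul, mul_one]
    have e2 : ∀ v ∈ Finset.univ \ S, (1:ℚ) = ∑ x ∈ S.filter (fun y => G.Adj v y), q v := by
      intro v hv
      have hv' : v ∉ S := (Finset.mem_sdiff.1 hv).2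
      have hpos := hAvpos v hv'
      rw [Finset.sum_const, nsmul_eq_mul, hq]
      field_simp
    have e3 : (∑ v ∈ Finset.univ \ S, ∑ x ∈ S.filter (fun y => G.Adj v y), q v)
        = ∑ x ∈ S, ∑ v ∈ Finset.univ.filter (fun w => G.Adj x w), q v := by
      have e3a : (∑ v ∈ Finset.univ \ S, ∑ x ∈ S.filter (fun y => G.Adj v y), q v)
          = ∑ v ∈ Finset.univ \ S, ∑ x ∈ S, (if G.Adj v x then q v else 0) := by
        refine Finset.sum_congr rfl (fun v _ => ?_)
        rw [Finset.sum_filter]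
      have e3b : (∑ v ∈ Finset.univ \ S, ∑ x ∈ S, (if G.Adj v x then q v else 0))
          = ∑ x ∈ S, ∑ v ∈ Finset.univ \ S, (if G.Adj v x then q v else 0) :=
        Finset.sum_comm
      have e3c : ∀ x ∈ S, (∑ v ∈ Finset.univ \ S, (if G.Adj v x then q v else 0))
          = ∑ v ∈ Finset.univ.filter (fun w => G.Adj x w), q v := by
        intro x hxS
        rw [← Finset.sum_filter]
        congr 1
        ext w
        simp only [Finset.mem_filter, Finset.mem_sdiff, Finset.mem_univ, true_and]
        constructor
        · rintro ⟨-, h⟩; exact h.symm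
        · intro h
          exact ⟨fun hwS => hS x hxS w hwS h, h.symm⟩
      rw [e3a, e3b]
      exact Finset.sum_congr rfl e3c
    calc ((Finset.univ \ S).card : ℚ)
        = ∑ v ∈ Finset.univ \ S, (1:ℚ) := e1
      _ = ∑ v ∈ Finset.univ \ S, ∑ x ∈ S.filter (fun y => G.Adj v y), q v :=
          Finset.sum_congr rfl e2
      _ = ∑ x ∈ S, ∑ v ∈ Finset.univ.filter (fun w => G.Adj x w), q v := e3
      _ ≤ ∑ _x ∈ S, ((W:ℚ) - 1) := Finset.sum_le_sum key
      _ = (S.card : ℚ) * ((W:ℚ) - 1) := by rw [Finset.sum_const, nsmul_eq_mul]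
  -- conclude
  have hcards : (Finset.univ \ S).card = Fintype.card V - S.card := by
    rw [Finset.card_sdiff_of_subset (Finset.subset_univ S), Finset.card_univ]
  have hSle : S.card ≤ Fintype.card V := Finset.card_le_univ S
  have hQ : ((Fintype.card V : ℚ)) ≤ (S.card : ℚ) * (W:ℚ) := by
    have : ((Fintype.card V - S.card : ℕ) : ℚ) ≤ (S.card : ℚ) * ((W:ℚ) - 1) := by
      rw [← hcards]; exact hswap
    rw [Nat.cast_sub hSle] at this
    nlinarith [this]
  have hN : Fintype.card V ≤ S.card * W := by exact_mod_cast hQ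
  calc Fintype.card V ≤ S.card * W := hN
    _ ≤ alphaNum G * omegaNum G :=
        Nat.mul_le_mul_right _ (stabF_card_le_alpha hS)

end Aux

/-- a connected diamond-free CIS graph satisfies α·ω ≥ |V|, and consequently
has a clique or stable set of size at least √|V|. -/
theorem stmt13 {V : Type*} [Fintype V] (G : SimpleGraph V)
    (hconn : G.Connected) (hdf : DiamondFree G)
    (hCIS : ∀ C S : Set V, IsMaxClique G C → IsMaxStable G S → (C ∩ S).Nonempty) :
    Fintype.card V ≤ alphaNum G * omegaNum G ∧
      ∃ s : Finset V, (G.IsClique (s : Set V) ∨ ∀ u ∈ s, ∀ w ∈ s, ¬ G.Adj u w) ∧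
        Real.sqrt (Fintype.card V) ≤ s.card := by
  have hne : Nonempty V := hconn.nonempty
  have h1 : Fintype.card V ≤ alphaNum G * omegaNum G := main_count hdf hCIS hne
  refine ⟨h1, ?_⟩
  rcases le_total (alphaNum G) (omegaNum G) with hle | hle
  · have hωmem : omegaNum G ∈ {k | ∃ s : Finset V, G.IsNClique k s} :=
      Nat.sSup_mem ⟨0, ∅, ⟨by simp, by simp⟩⟩ bddAbove_omegaSet
    obtain ⟨s, hs⟩ := hωmem
    refine ⟨s, Or.inl hs.isClique, ?_⟩
    rw [hs.card_eq]
    have h2 : (Fintype.card V : ℝ) ≤ ((omegaNum G : ℝ))^2 := by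
      have : Fintype.card V ≤ omegaNum G * omegaNum G :=
        h1.trans (Nat.mul_le_mul_right _ hle)
      rw [sq]
      exact_mod_cast this
    calc Real.sqrt (Fintype.card V) ≤ Real.sqrt (((omegaNum G : ℝ))^2) :=
          Real.sqrt_le_sqrt h2
      _ = (omegaNum G : ℝ) := Real.sqrt_sq (by positivity)
  · have hαmem : alphaNum G ∈
        {k | ∃ s : Finset V, s.card = k ∧ ∀ u ∈ s, ∀ w ∈ s, ¬ G.Adj u w} :=
      Nat.sSup_mem ⟨0, ∅, by simp, by simp⟩ bddAbove_alphaSet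
    obtain ⟨s, hcard, hstab⟩ := hαmem
    refine ⟨s, Or.inr hstab, ?_⟩
    rw [hcard]
    have h2 : (Fintype.card V : ℝ) ≤ ((alphaNum G : ℝ))^2 := by
      have : Fintype.card V ≤ alphaNum G * alphaNum G :=
        h1.trans (Nat.mul_le_mul_left _ hle)
      rw [sq]
      exact_mod_cast this
    calc Real.sqrt (Fintype.card V) ≤ Real.sqrt (((alphaNum G : ℝ))^2) :=
          Real.sqrt_le_sqrt h2
      _ = (alphaNum G : ℝ) := Real.sqrt_sq (by positivity)
end

section
/- Let G be a graph in which every vertex belongs to some simplicial clique, and let S be the stable set obtained by the greedy algorithm processing vertices in nondecreasing order of degree (adding a vertex to S whenever it has no neighbor already in S). Then S consists only of simplicial vertices and contains exactly one vertex from each simplicial clique of G. -/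
/-- if every vertex of G lies in a simplicial clique and S is the greedy stable
set for an ordering by nondecreasing degrees, then S consists of simplicial vertices only and
contains exactly one vertex of each simplicial clique. -/
theorem stmt15 {V : Type*} [Fintype V] (G : SimpleGraph V) [DecidableRel G.Adj]
    (hcov : ∀ x : V, ∃ w : V, G.IsClique (insert w (G.neighborSet w)) ∧
      x ∈ insert w (G.neighborSet w))
    (f : V → ℕ) (hf : Function.Injective f)
    (hmono : ∀ u w : V, f u ≤ f w → G.degree u ≤ G.degree w)
    (S : Set V) (hS : ∀ x : V, x ∈ S ↔ ∀ u ∈ S, f u < f x → ¬ G.Adj u x) :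
    (∀ x ∈ S, G.IsClique (insert x (G.neighborSet x))) ∧
      (∀ w : V, G.IsClique (insert w (G.neighborSet w)) →
        ∃! x : V, x ∈ S ∧ x ∈ insert w (G.neighborSet w)) := by
  classical
  have hstab : ∀ u ∈ S, ∀ x ∈ S, u ≠ x → ¬ G.Adj u x := by
    intro u hu x hx hne
    rcases lt_or_gt_of_ne (fun h => hne (hf h)) with h | h
    · exact (hS x).1 hx u hu h
    · intro hadj; exact (hS u).1 hu x hx h hadj.symm
  have hpart2 : ∀ w : V, G.IsClique (insert w (G.neighborSet w)) →
      ∃! x : V, x ∈ S ∧ x ∈ insert w (G.neighborSet w) := by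
    intro w hK
    have hex : ∃ x, x ∈ S ∧ x ∈ insert w (G.neighborSet w) := by
      by_cases hw : w ∈ S
      · exact ⟨w, hw, Set.mem_insert _ _⟩
      · rw [hS w] at hw; push_neg at hw
        obtain ⟨u, hu, hlt, hadj⟩ := hw
        exact ⟨u, hu, Set.mem_insert_of_mem _ hadj.symm⟩
    obtain ⟨x, hxS, hxK⟩ := hex
    refine ⟨x, ⟨hxS, hxK⟩, ?_⟩
    rintro y ⟨hyS, hyK⟩
    by_contra hne
    exact hstab y hyS x hxS hne (hK hyK hxK hne)
  refine ⟨?_, hpart2⟩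
  intro x hx
  obtain ⟨w, hK, hxK⟩ := hcov x
  by_cases hxw : x = w
  · exact hxw ▸ hK
  · have hadj_wx : G.Adj w x := by
      rcases hxK with h | h
      · exact absurd h hxw
      · exact h
    have hsub : insert w (G.neighborSet w) ⊆ insert x (G.neighborSet x) := by
      intro y hy
      by_cases hyx : y = x
      · exact hyx ▸ Set.mem_insert _ _
      · exact Set.mem_insert_of_mem _ (hK hy hxK hyx).symm
    have hwS : w ∉ S := fun hwS => hstab w hwS x hx (Ne.symm hxw) hadj_wx
    rw [hS w] at hwS; push_neg at hwS
    obtain ⟨u, hu, hlt, hadj⟩ := hwS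
    have hux : u = x := by
      obtain ⟨z, _, huniq⟩ := hpart2 w hK
      rw [huniq u ⟨hu, Set.mem_insert_of_mem _ hadj.symm⟩, huniq x ⟨hx, hxK⟩]
    rw [hux] at hlt
    have hdeg1 : G.degree x ≤ G.degree w := hmono x w (le_of_lt hlt)
    have hcard : ∀ v : V, (insert v (G.neighborSet v)).ncard = G.degree v + 1 := by
      intro v
      rw [Set.ncard_insert_of_notMem (by simp)]
      congr 1
      rw [Set.ncard_eq_toFinset_card']
      simp [SimpleGraph.degree, SimpleGraph.neighborFinset]
    have heq : insert w (G.neighborSet w) = insert x (G.neighborSet x) := by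
      apply Set.eq_of_subset_of_ncard_le hsub
      rw [hcard w, hcard x]; omega
    rw [← heq]; exact hK
end

section
/- Let G be an edge simplicial diamond-free graph. Then for any two distinct simplicial vertices v, w of G, the simplicial cliques N[v] and N[w] share no edge; consequently ∑_v binom(d(v)+1, 2) ≤ |E(G)|, where the sum is over one simplicial vertex chosen from each simplicial clique. -/
/-- in an edge simplicial diamond-free graph, distinct simplicial cliques N[v],
N[w] share no edge; consequently, summing binom(d(v)+1, 2) over one simplicial vertex per
simplicial clique is at most |E(G)|. -/
theorem stmt17 {V : Type*} [Fintype V] [DecidableEq V] (G : SimpleGraph V)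
    [DecidableRel G.Adj] (hdf : DiamondFree G)
    (hes : ∀ u w : V, G.Adj u w → ∃ x : V, G.IsClique (insert x (G.neighborSet x)) ∧
      u ∈ insert x (G.neighborSet x) ∧ w ∈ insert x (G.neighborSet x)) :
    (∀ v w : V, v ≠ w → G.IsClique (insert v (G.neighborSet v)) →
      G.IsClique (insert w (G.neighborSet w)) →
      insert v (G.neighborSet v) ≠ insert w (G.neighborSet w) →
      ¬ ∃ a b : V, G.Adj a b ∧ a ∈ insert v (G.neighborSet v) ∧
        b ∈ insert v (G.neighborSet v) ∧ a ∈ insert w (G.neighborSet w) ∧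
        b ∈ insert w (G.neighborSet w)) ∧
    (∀ T : Finset V, (∀ v ∈ T, G.IsClique (insert v (G.neighborSet v))) →
      (∀ v ∈ T, ∀ w ∈ T, v ≠ w →
        insert v (G.neighborSet v) ≠ insert w (G.neighborSet w)) →
      (∀ w : V, G.IsClique (insert w (G.neighborSet w)) →
        ∃ v ∈ T, insert v (G.neighborSet v) = insert w (G.neighborSet w)) →
      ∑ v ∈ T, (G.degree v + 1).choose 2 ≤ G.edgeFinset.card) := by
  classical
  -- auxiliary: a clique K sharing an edge a-b with N[w] cannot contain x ∉ N[w]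
  have aux : ∀ (K : Set V) (w a b x : V), G.IsClique K → G.Adj a b →
      a ∈ K → b ∈ K → a ∈ insert w (G.neighborSet w) → b ∈ insert w (G.neighborSet w) →
      x ∈ K → x ∉ insert w (G.neighborSet w) → False := by
    intro K w a b x hK hab haK hbK haw hbw hxK hxw
    have hxwne : x ≠ w := by rintro rfl; exact hxw (Set.mem_insert _ _)
    have hnwx : ¬ G.Adj w x := fun h => hxw (Set.mem_insert_of_mem _ h)
    have hax : a ≠ x := by rintro rfl; exact hxw haw
    have hbx : b ≠ x := by rintro rfl; exact hxw hbw
    have hAax : G.Adj a x := hK haK hxK hax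
    have hAbx : G.Adj b x := hK hbK hxK hbx
    have hAaw : G.Adj a w := by
      rcases haw with rfl | h
      · exact absurd hAax hnwx
      · exact (SimpleGraph.mem_neighborSet _ _ _ |>.mp h).symm
    have hAbw : G.Adj b w := by
      rcases hbw with rfl | h
      · exact absurd hAbx hnwx
      · exact (SimpleGraph.mem_neighborSet _ _ _ |>.mp h).symm
    exact hdf ⟨a, b, x, w, hab.ne, hax, hAaw.ne, hbx, hAbw.ne, hxwne, hab, hAax, hAaw, hAbx,
      hAbw, fun h => hnwx h.symm⟩
  have part1 : ∀ v w : V, v ≠ w → G.IsClique (insert v (G.neighborSet v)) →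
      G.IsClique (insert w (G.neighborSet w)) →
      insert v (G.neighborSet v) ≠ insert w (G.neighborSet w) →
      ¬ ∃ a b : V, G.Adj a b ∧ a ∈ insert v (G.neighborSet v) ∧
        b ∈ insert v (G.neighborSet v) ∧ a ∈ insert w (G.neighborSet w) ∧
        b ∈ insert w (G.neighborSet w) := by
    intro v w hvw hv hw hne
    rintro ⟨a, b, hab, hav, hbv, haw, hbw⟩
    by_cases hsub : insert v (G.neighborSet v) ⊆ insert w (G.neighborSet w)
    · have hns : ¬ insert w (G.neighborSet w) ⊆ insert v (G.neighborSet v) :=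
        fun h => hne (Set.Subset.antisymm hsub h)
      obtain ⟨x, hx1, hx2⟩ := Set.not_subset.mp hns
      exact aux _ v a b x hw hab haw hbw hav hbv hx1 hx2
    · obtain ⟨x, hx1, hx2⟩ := Set.not_subset.mp hsub
      exact aux _ w a b x hv hab hav hbv haw hbw hx1 hx2
  refine ⟨part1, ?_⟩
  intro T hT1 hT2 _
  set S : V → Finset V := fun v => insert v (G.neighborFinset v) with hS
  have hSmem : ∀ v x : V, x ∈ S v ↔ x ∈ insert v (G.neighborSet v) := by
    intro v x
    simp [hS, Set.mem_insert_iff]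
  have hScard : ∀ v : V, (S v).card = G.degree v + 1 := by
    intro v
    rw [hS]
    rw [Finset.card_insert_of_notMem (SimpleGraph.notMem_neighborFinset_self G v),
      G.card_neighborFinset_eq_degree v]
  set m : V → Finset (Sym2 V) := fun v => G.edgeFinset.filter (fun e => ∀ x ∈ e, x ∈ S v)
    with hm
  have hcard : ∀ v ∈ T, (m v).card = (G.degree v + 1).choose 2 := by
    intro v hv
    have hclique := hT1 v hv
    have hmv : m v = (S v).sym2.filter (fun e => ¬ e.IsDiag) := by
      ext e
      induction e using Sym2.ind with
      | _ a b =>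
        simp only [hm, Finset.mem_filter, SimpleGraph.mem_edgeFinset, SimpleGraph.mem_edgeSet,
          Sym2.mem_iff, Finset.mk_mem_sym2_iff, Sym2.isDiag_iff_proj_eq]
        constructor
        · rintro ⟨hab, hmem⟩
          exact ⟨⟨hmem a (Or.inl rfl), hmem b (Or.inr rfl)⟩, hab.ne⟩
        · rintro ⟨⟨haS, hbS⟩, hne⟩
          have hab : G.Adj a b :=
            hclique ((hSmem v a).mp haS) ((hSmem v b).mp hbS) hne
          refine ⟨hab, ?_⟩
          rintro x (rfl | rfl)
          · exact haS
          · exact hbS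
    have hdiag : ((S v).sym2.filter (fun e => e.IsDiag)).card = (S v).card := by
      have himg : (S v).sym2.filter (fun e => e.IsDiag) = (S v).image Sym2.diag := by
        ext e
        induction e using Sym2.ind with
        | _ a b =>
          simp only [Finset.mem_filter, Finset.mk_mem_sym2_iff, Sym2.isDiag_iff_proj_eq,
            Finset.mem_image]
          constructor
          · rintro ⟨⟨haS, hbS⟩, rfl⟩
            exact ⟨a, haS, rfl⟩
          · rintro ⟨c, hcS, hc⟩
            rw [Sym2.diag, Sym2.eq_iff] at hc
            rcases hc with ⟨rfl, rfl⟩ | ⟨rfl, rfl⟩ <;> exact ⟨⟨hcS, hcS⟩, rfl⟩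
      rw [himg, Finset.card_image_of_injective _ Sym2.diag_injective]
    have hsplit := Finset.card_filter_add_card_filter_not
      (s := (S v).sym2) (p := fun e => e.IsDiag)
    have htot : (S v).sym2.card = ((S v).card) + ((S v).card).choose 2 := by
      rw [Finset.card_sym2]
      rw [Nat.choose_succ_succ ((S v).card) 1]
      simp [Nat.choose_one_right, Nat.add_comm]
    rw [hmv]
    have h1 := hScard v
    rw [hdiag, htot, h1] at hsplit
    omega
  have hdisj : ∀ v ∈ T, ∀ w ∈ T, v ≠ w → Disjoint (m v) (m w) := by
    intro v hv w hw hvw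
    rw [Finset.disjoint_left]
    intro e
    induction e using Sym2.ind with
    | _ a b =>
      intro hev hew
      simp only [hm, Finset.mem_filter, SimpleGraph.mem_edgeFinset, SimpleGraph.mem_edgeSet,
        Sym2.mem_iff] at hev hew
      exact part1 v w hvw (hT1 v hv) (hT1 w hw) (hT2 v hv w hw hvw)
        ⟨a, b, hev.1, (hSmem v a).mp (hev.2 a (Or.inl rfl)),
          (hSmem v b).mp (hev.2 b (Or.inr rfl)),
          (hSmem w a).mp (hew.2 a (Or.inl rfl)),
          (hSmem w b).mp (hew.2 b (Or.inr rfl))⟩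
  calc ∑ v ∈ T, (G.degree v + 1).choose 2 = ∑ v ∈ T, (m v).card :=
        Finset.sum_congr rfl fun v hv => (hcard v hv).symm
    _ = (T.biUnion m).card := (Finset.card_biUnion hdisj).symm
    _ ≤ G.edgeFinset.card :=
        Finset.card_le_card (Finset.biUnion_subset.mpr fun v _ => Finset.filter_subset _ _)
end
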